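/- arXiv:2509.20848 — 4 statements merged into one kernel-verified Lean document; each statement's English description precedes it below -/
import Mathlib

section
/- Let X be a finite set, let C be a nonempty finite family of functions from X to {0,1}, and let f : X → {0,1}. Then there exists a subset Q ⊆ X with |Q| ≤ |C| − 1 such that any two functions g₁, g₂ ∈ C that both agree with f at every point of Q agree with each other at every point of X. -/
/-!
Query a point `x` of `X` on which two candidates disagree. At least one of them differs
from `f` at `x`, so the candidates agreeing with `f` at `x` form a proper subfamily, and by
induction on the family a further `|C'| - 1` queries settle it. When the family already
agrees on `X`, no query is needed.
-/

open Finset Set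

section

variable {α β : Type*}

theorem filter_apply_eq_ssubset_of_apply_ne [DecidableEq β] {C : Finset (α → β)}
    {g₁ g₂ : α → β} (h₁ : g₁ ∈ C) (h₂ : g₂ ∈ C) {x : α} (hne : g₁ x ≠ g₂ x) (b : β) :
    {g ∈ C | g x = b} ⊂ C := by
  rw [filter_ssubset]
  rcases hne.ne_or_ne b with h | h
  exacts [⟨g₁, h₁, h⟩, ⟨g₂, h₂, h⟩]

theorem exists_query_subset_eqOn (X : Finset α) (C : Finset (α → β)) (f : α → β) :
    ∃ Q ⊆ X, #Q ≤ #C - 1 ∧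
      ∀ g₁ ∈ C, ∀ g₂ ∈ C, EqOn g₁ f Q → EqOn g₂ f Q → EqOn g₁ g₂ X := by
  classical
  induction C using Finset.strongInduction with
  | H C ih =>
    by_cases hagree : ∀ g₁ ∈ C, ∀ g₂ ∈ C, EqOn g₁ g₂ X
    · exact ⟨∅, empty_subset _, Nat.zero_le _, fun g₁ h₁ g₂ h₂ _ _ => hagree g₁ h₁ g₂ h₂⟩
    simp only [EqOn, not_forall] at hagree
    obtain ⟨g₁, h₁, g₂, h₂, x, hx, hne⟩ := hagree
    have hC' := filter_apply_eq_ssubset_of_apply_ne h₁ h₂ hne (f x)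
    obtain ⟨Q, hQX, hQcard, hQ⟩ := ih _ hC'
    refine ⟨insert x Q, insert_subset hx hQX, ?_, ?_⟩
    · -- `1 < #C` handles the case where no candidate survives the query at `x`.
      have htwo : 1 < #C := one_lt_card.2 ⟨g₁, h₁, g₂, h₂, fun h => hne (congrFun h x)⟩
      have hlt := Finset.card_lt_card hC'
      have hins := card_insert_le x Q
      omega
    · intro a ha b hb haf hbf
      have hQ_sub : (Q : Set α) ⊆ ↑(insert x Q) := coe_subset.2 (subset_insert x Q)
      exact hQ a (mem_filter.2 ⟨ha, haf (mem_insert_self x Q)⟩)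
        b (mem_filter.2 ⟨hb, hbf (mem_insert_self x Q)⟩) (haf.mono hQ_sub) (hbf.mono hQ_sub)

end

theorem stmt_3_general {α : Type*} (X : Finset α) (C : Finset (α → Bool))
    (f : α → Bool) :
    ∃ Q : Finset α, Q ⊆ X ∧ Q.card ≤ C.card - 1 ∧
      ∀ g₁ ∈ C, ∀ g₂ ∈ C, (∀ q ∈ Q, g₁ q = f q) → (∀ q ∈ Q, g₂ q = f q) →
        ∀ x ∈ X, g₁ x = g₂ x := by
  obtain ⟨Q, hQX, hQcard, hQ⟩ := exists_query_subset_eqOn X C f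
  exact ⟨Q, hQX, hQcard, fun g₁ h₁ g₂ h₂ e₁ e₂ => hQ g₁ h₁ g₂ h₂ e₁ e₂⟩

/-- Contender subroutine (Claim 2.1): given a nonempty finite family `C` of candidate
labelings of a finite set `X` and a target labeling `f`, there is a query set `Q ⊆ X` of
size at most `|C| - 1` such that any two candidates agreeing with `f` on all of `Q`
agree with each other on all of `X`. -/
theorem stmt_3 {α : Type*} [DecidableEq α] (X : Finset α) (C : Finset (α → Bool))
    (hC : C.Nonempty) (f : α → Bool) :
    ∃ Q : Finset α, Q ⊆ X ∧ Q.card ≤ C.card - 1 ∧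
      ∀ g₁ ∈ C, ∀ g₂ ∈ C, (∀ q ∈ Q, g₁ q = f q) → (∀ q ∈ Q, g₂ q = f q) →
        ∀ x ∈ X, g₁ x = g₂ x :=
  stmt_3_general X C f
end

section
/- For every d ≥ 1 there exist points x_1, …, x_{2d} ∈ ℝ^d and decision stumps h_0, h_1, …, h_{2d} : ℝ^d → {0,1} such that for all i, j ∈ {1,…,2d}: h_i(x_j) ≠ h_0(x_j) if and only if i = j. In other words, the star number of the class of decision stumps over ℝ^d is at least 2d. -/
/-- The decision stump `f_{i,t} : ℝ^d → {0,1}`, equal to `1` iff `x_i ≥ t`. -/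
noncomputable def stump (d : ℕ) (i : Fin d) (t : ℝ) : (Fin d → ℝ) → Bool :=
  fun x => decide (t ≤ x i)

/-- A function is a decision stump if it equals `f_{i,t}` for some coordinate `i` and
threshold `t`. -/
def IsStump {d : ℕ} (h : (Fin d → ℝ) → Bool) : Prop :=
  ∃ (i : Fin d) (t : ℝ), h = stump d i t

/-!
Index the `2d` points by a sign `b` and a coordinate `k`: the point `x_{b,k}` is `±1` in
coordinate `k` and `±3` elsewhere, with sign `+` iff `b`. The stump `h_0 = [0 ≤ x_i]` reads
off the sign. On the positive points, `[2 ≤ x_k]` fails exactly at `x_{true,k}`, and it is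
false on all negative points, like `h_0`; symmetrically, `[-2 ≤ x_k]` holds on the negative
points exactly at `x_{false,k}`, and on all positive points, like `h_0`.
-/

def IsStarWitness {X ι : Type*} (h0 : X → Bool) (h : ι → X → Bool) (x : ι → X) : Prop :=
  ∀ i j, h i (x j) ≠ h0 (x j) ↔ i = j

lemma IsStarWitness.comp_injective {X ι κ : Type*} {h0 : X → Bool} {h : ι → X → Bool}
    {x : ι → X} (hx : IsStarWitness h0 h x) {e : κ → ι} (he : Function.Injective e) :
    IsStarWitness h0 (h ∘ e) (x ∘ e) :=
  fun i j => (hx (e i) (e j)).trans he.eq_iff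

def spike (d : ℕ) (b : Bool) (k : Fin d) : Fin d → ℝ :=
  fun m => (if b then 1 else -1) * (if m = k then 1 else 3)

lemma stump_zero_spike {d : ℕ} (i : Fin d) (b : Bool) (k : Fin d) :
    stump d i 0 (spike d b k) = b := by
  by_cases hik : i = k <;> cases b <;> simp [stump, spike, hik]

lemma stump_spike {d : ℕ} (b : Bool) (k : Fin d) (b' : Bool) (j : Fin d) :
    stump d k (if b then 2 else -2) (spike d b' j) = xor b' (decide ((b, k) = (b', j))) := by
  by_cases hkj : k = j <;> cases b <;> cases b' <;> simp [stump, spike, hkj] <;> norm_num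

theorem isStarWitness_stump_spike {d : ℕ} (i : Fin d) :
    IsStarWitness (stump d i 0) (fun p : Bool × Fin d => stump d p.2 (if p.1 then 2 else -2))
      (fun p => spike d p.1 p.2) := by
  rintro ⟨b, k⟩ ⟨b', j⟩
  simp only [stump_spike, stump_zero_spike]
  cases b' <;> simp

/-- The star number of the class of decision stumps over `ℝ^d` is at least `2d`:
there are points `x_1, …, x_{2d}` and stumps `h_0, h_1, …, h_{2d}` such that `h_i`
disagrees with `h_0` at `x_j` exactly when `i = j`. -/
theorem stmt_4 (d : ℕ) (hd : 1 ≤ d) :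
    ∃ (x : Fin (2 * d) → (Fin d → ℝ)) (h0 : (Fin d → ℝ) → Bool)
      (h : Fin (2 * d) → (Fin d → ℝ) → Bool),
      IsStump h0 ∧ (∀ i, IsStump (h i)) ∧
        ∀ i j : Fin (2 * d), (h i (x j) ≠ h0 (x j) ↔ i = j) := by
  let e : Fin (2 * d) ≃ Bool × Fin d :=
    finProdFinEquiv.symm.trans (finTwoEquiv.prodCongr (Equiv.refl _))
  exact ⟨_, _, _, ⟨⟨0, hd⟩, 0, rfl⟩, fun _ => ⟨_, _, rfl⟩,
    (isStarWitness_stump_spike ⟨0, hd⟩).comp_injective e.injective⟩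
end

section
/- Let s ∈ ℕ, let x_1, …, x_s ∈ ℝ^d, and let h_0, h_1, …, h_s : ℝ^d → {0,1} be decision stumps such that for all i, j ∈ {1,…,s}: h_i(x_j) ≠ h_0(x_j) if and only if i = j. Then s ≤ 2d. In other words, the star number of the class of decision stumps over ℝ^d is at most 2d. -/
/-! Two stumps on the same coordinate disagree exactly on the half-open interval between their
thresholds, where the one with the smaller threshold is `true` and the other `false`. Hence two
star points `x_j`, `x_k` whose stumps `h_j`, `h_k` share a coordinate get different values
`h_j (x_j) ≠ h_k (x_k)`, so `j ↦ (coordinate of h_j, h_j (x_j)) ∈ Fin d × Bool` is injective. -/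

theorem stump_apply_ne_of_disagree {d : ℕ} {i : Fin d} {t₁ t₂ : ℝ} {y₁ y₂ : Fin d → ℝ}
    (h₁ : stump d i t₁ y₁ ≠ stump d i t₂ y₁) (h₂ : stump d i t₁ y₂ ≠ stump d i t₂ y₂) :
    stump d i t₁ y₁ ≠ stump d i t₂ y₂ := by
  simp only [stump, ne_eq, decide_eq_decide] at *
  grind

theorem apply_ne_apply_of_star {α ι : Type*} {x : ι → α} {h₀ : α → Bool} {h : ι → α → Bool}
    (hstar : ∀ i j, h i (x j) ≠ h₀ (x j) ↔ i = j) {j k : ι} (hjk : j ≠ k) :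
    h j (x k) ≠ h k (x k) := by
  have hj : h j (x k) = h₀ (x k) := not_not.mp (mt (hstar j k).mp hjk)
  exact hj ▸ fun hk => (hstar k k).mpr rfl hk.symm

theorem stmt_5_general (d s : ℕ) (x : Fin s → (Fin d → ℝ)) (h0 : (Fin d → ℝ) → Bool)
    (h : Fin s → (Fin d → ℝ) → Bool)
    (hh : ∀ i, IsStump (h i))
    (hstar : ∀ i j : Fin s, (h i (x j) ≠ h0 (x j) ↔ i = j)) :
    s ≤ 2 * d := by
  choose coord thr hstump using hh
  have hinj : Function.Injective fun j => (coord j, h j (x j)) := by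
    intro j k hjk
    obtain ⟨hcoord, hval⟩ := Prod.mk.inj hjk
    by_contra hne
    have h₁ := apply_ne_apply_of_star hstar (Ne.symm hne)
    have h₂ := apply_ne_apply_of_star hstar hne
    rw [hstump j, hstump k, ← hcoord] at h₁ h₂ hval
    exact stump_apply_ne_of_disagree (Ne.symm h₁) h₂ hval
  simpa [mul_comm] using Fintype.card_le_of_injective _ hinj

/-- The star number of the class of decision stumps over `ℝ^d` is at most `2d`:
if points `x_1, …, x_s` and stumps `h_0, h_1, …, h_s` satisfy that `h_i` disagrees
with `h_0` at `x_j` exactly when `i = j`, then `s ≤ 2d`. -/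
theorem stmt_5 (d s : ℕ) (x : Fin s → (Fin d → ℝ)) (h0 : (Fin d → ℝ) → Bool)
    (h : Fin s → (Fin d → ℝ) → Bool)
    (hh0 : IsStump h0) (hh : ∀ i, IsStump (h i))
    (hstar : ∀ i j : Fin s, (h i (x j) ≠ h0 (x j) ↔ i = j)) :
    s ≤ 2 * d :=
  stmt_5_general d s x h0 h hh hstar
end

section
/- Let n ≥ 1 and let g : {1,…,n} → {0,1} be such that for every monotone h : {1,…,n} → {0,1}, the number of points k with g(k) ≠ h(k) is at least εn, where ε > 0. Let s ≥ 2 and draw indices j_1, …, j_s independently and uniformly at random from {1,…,n}. Then the probability that there exist a, b ∈ {1,…,s} with j_a < j_b, g(j_a) = 1 and g(j_b) = 0 is at least (1 − e^{−εs/2})². -/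
/-!
Every threshold function `k ↦ [t ≤ k]` is monotone, so it disagrees with `g` in at least
`D = ⌈εn⌉` points. Let `R` be the set of the first `D` ones of `g`. A sample without a
violation either misses `R`, or its leftmost sampled one `o` lies in `R`; in the latter case
every sampled point is a point where `g` agrees with the threshold at `o`, and there are at
most `n - D` of those. Hence at most `(n - D)^s + D s (n - D)^(s-1)` of the `n^s` samples are
violation-free, and with `θ = D / n ≥ ε` the estimate `1 - θ ≤ e^{-θ}` bounds
`(1 - θ)^s + s θ (1 - θ)^(s-1)` by `1 - (1 - e^{-θs/2})^2`.
-/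

open Finset Real

lemma Nat.exists_eq_of_succ_le_add_one {f : ℕ → ℕ} (h0 : f 0 = 0)
    (hf : ∀ t, f (t + 1) ≤ f t + 1) {D : ℕ} : ∀ {N}, D ≤ f N → ∃ t, f t = D
  | 0, hD => ⟨0, by omega⟩
  | N + 1, hD => by
    by_cases hN : D ≤ f N
    · exact Nat.exists_eq_of_succ_le_add_one h0 hf hN
    · exact ⟨N + 1, by have := hf N; omega⟩

lemma Finset.exists_card_filter_val_lt_eq {n D : ℕ} (S : Finset (Fin n)) (hD : D ≤ #S) :
    ∃ t : ℕ, #{k ∈ S | k.val < t} = D := by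
  refine Nat.exists_eq_of_succ_le_add_one (N := n) (by simp) (fun t => ?_) (by simpa using hD)
  calc #{k ∈ S | k.val < t + 1}
      ≤ #({k ∈ S | k.val < t} ∪ {k ∈ S | k.val = t}) := by
        gcongr
        intro k
        simp only [mem_filter, mem_union]
        exact fun ⟨hS, hk⟩ => (Nat.lt_succ_iff_lt_or_eq.1 hk).imp (⟨hS, ·⟩) (⟨hS, ·⟩)
    _ ≤ #{k ∈ S | k.val < t} + 1 := by
        refine (card_union_le _ _).trans (Nat.add_le_add_left (card_le_one.2 ?_) _)
        simp only [mem_filter]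
        exact fun a ha b hb => Fin.ext (ha.2.trans hb.2.symm)

lemma Fintype.card_piFinset_update_singleton_le {ι α : Type*} [Fintype ι] [DecidableEq ι]
    [DecidableEq α] (A : Finset α) (u : ι) (x : α) {m : ℕ} (hA : #A ≤ m) :
    #(Fintype.piFinset (Function.update (fun _ => A) u {x})) ≤ m ^ (Fintype.card ι - 1) := by
  rw [Fintype.card_piFinset]
  simp only [Function.apply_update (fun _ => Finset.card), card_singleton]
  rw [prod_update_of_mem (mem_univ u), one_mul, ← card_univ, ← card_singleton u,
    ← card_sdiff_of_subset (subset_univ _)]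
  exact prod_le_pow_card _ _ _ fun _ _ => hA

def threshold {n : ℕ} (t : ℕ) : Fin n → Bool := fun k => decide (t ≤ (k : ℕ))

lemma monotone_threshold {n : ℕ} (t : ℕ) : Monotone (threshold (n := n) t) := by
  intro k k' hk
  simp only [threshold, Bool.le_iff_imp, decide_eq_true_eq]
  exact fun h => h.trans hk

def HasViolation {n s : ℕ} (g : Fin n → Bool) (j : Fin s → Fin n) : Prop :=
  ∃ a b : Fin s, j a < j b ∧ g (j a) = true ∧ g (j b) = false

instance {n s : ℕ} (g : Fin n → Bool) : DecidablePred (HasViolation (s := s) g) :=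
  fun _ => inferInstanceAs (Decidable (∃ _ _, _))

section Sampling

variable {n s : ℕ} {g : Fin n → Bool}

lemma agrees_threshold_of_isLeast_one {j : Fin s → Fin n} (hj : ¬ HasViolation g j)
    {u₀ : Fin s} (hone : g (j u₀) = true) (hleast : ∀ v, g (j v) = true → j u₀ ≤ j v)
    (v : Fin s) : g (j v) = threshold (j u₀ : ℕ) (j v) := by
  unfold threshold
  cases hv : g (j v)
  · refine (decide_eq_false fun hle => hj ⟨u₀, v, ?_, hone, hv⟩).symm
    exact lt_of_le_of_ne (Fin.le_iff_val_le_val.2 hle) fun h => by simp_all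
  · exact (decide_eq_true (hleast v hv)).symm

lemma card_not_hasViolation_le (t₀ m : ℕ) (hagree : ∀ t : ℕ, #{k | g k = threshold t k} ≤ m) :
    #{j : Fin s → Fin n | ¬ HasViolation g j} ≤
      (n - #{k | g k = true ∧ k.val < t₀}) ^ s +
        #{k | g k = true ∧ k.val < t₀} * (s * m ^ (s - 1)) := by
  set R : Finset (Fin n) := {k | g k = true ∧ k.val < t₀}
  set A : ℕ → Finset (Fin n) := fun t => {k | g k = threshold t k}
  set cover : Fin n → Fin s → Finset (Fin s → Fin n) :=
    fun o u => Fintype.piFinset (Function.update (fun _ => A o) u {o})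
  have hcover : ({j | ¬ HasViolation g j} : Finset (Fin s → Fin n)) ⊆
      Fintype.piFinset (fun _ => Rᶜ) ∪ R.biUnion fun o => univ.biUnion fun u => cover o u := by
    intro j hj
    replace hj := (mem_filter.1 hj).2
    by_cases hR : ∃ u, j u ∈ R
    · obtain ⟨u, hu⟩ := hR
      simp only [R, mem_filter, mem_univ, true_and] at hu
      obtain ⟨u₀, hu₀, hleast⟩ :=
        exists_min_image {v | g (j v) = true} j ⟨u, by simpa using hu.1⟩
      simp only [mem_filter, mem_univ, true_and] at hu₀ hleast
      have hu₀R : j u₀ ∈ R := by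
        simp only [R, mem_filter, mem_univ, true_and]
        exact ⟨hu₀, lt_of_le_of_lt (hleast u hu.1) hu.2⟩
      refine mem_union_right _ (mem_biUnion.2 ⟨j u₀, hu₀R, mem_biUnion.2 ⟨u₀, mem_univ _, ?_⟩⟩)
      refine Fintype.mem_piFinset.2 fun v => ?_
      by_cases hv : v = u₀
      · subst hv; simp
      · simpa [A, Function.update_of_ne hv] using agrees_threshold_of_isLeast_one hj hu₀ hleast v
    · exact mem_union_left _ (Fintype.mem_piFinset.2 fun v => mem_compl.2 fun h => hR ⟨v, h⟩)
  calc #{j : Fin s → Fin n | ¬ HasViolation g j}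
      ≤ #(Fintype.piFinset fun _ => Rᶜ) + #(R.biUnion fun o => univ.biUnion fun u => cover o u) :=
        (card_le_card hcover).trans (card_union_le _ _)
    _ ≤ (n - #R) ^ s + #R * (s * m ^ (s - 1)) := by
        gcongr
        · simp [Fintype.card_piFinset, card_compl]
        · refine card_biUnion_le_card_mul _ _ _ fun o _ => ?_
          simpa using card_biUnion_le_card_mul univ _ _ fun (u : Fin s) _ =>
            Fintype.card_piFinset_update_singleton_le _ u o (hagree o)

lemma card_not_hasViolation_le_of_le_card_ne {D : ℕ}
    (hdis : ∀ t : ℕ, D ≤ #{k | g k ≠ threshold t k}) :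
    #{j : Fin s → Fin n | ¬ HasViolation g j} ≤ (n - D) ^ s + D * (s * (n - D) ^ (s - 1)) := by
  have hagree (t : ℕ) : #{k | g k = threshold t k} ≤ n - D := by
    have := card_filter_add_card_filter_not (s := univ) (fun k => g k = threshold t k)
    have := hdis t
    simp only [card_univ, Fintype.card_fin, ne_eq] at *
    omega
  have hones : D ≤ #{k | g k = true} := by
    have hthr (k : Fin n) : threshold n k = false := decide_eq_false (not_le.2 k.isLt)
    simpa [hthr] using hdis n
  obtain ⟨t₀, ht₀⟩ := exists_card_filter_val_lt_eq _ hones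
  rw [filter_filter] at ht₀
  simpa [ht₀] using card_not_hasViolation_le t₀ (n - D) hagree

lemma card_hasViolation_div_pow (hn : 0 < n) :
    (Nat.card {j : Fin s → Fin n // HasViolation g j} : ℝ) / n ^ s =
      1 - #{j : Fin s → Fin n | ¬ HasViolation g j} / n ^ s := by
  rw [eq_sub_iff_add_eq, ← add_div, div_eq_one_iff_eq (by positivity),
    Nat.card_eq_fintype_card, Fintype.card_subtype]
  exact_mod_cast (card_filter_add_card_filter_not _).trans (by simp)

end Sampling

/- With `Q = (1 - θ)^(s-1) (2 + (s - 2) θ)` the left side is `Q - (1 - θ)^s`, while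
`Q^2 ≤ 4 (1 - θ)^s ≤ 4 e^{-θs}`; so it is at most `Q - Q^2/4 = 1 - (1 - Q/2)^2`
with `Q/2 ≤ e^{-θs/2}`. -/
lemma pow_add_mul_pow_le_one_sub_sq {θ : ℝ} (h0 : 0 ≤ θ) (h1 : θ ≤ 1) {s : ℕ} (hs : 2 ≤ s) :
    (1 - θ) ^ s + s * θ * (1 - θ) ^ (s - 1) ≤ 1 - (1 - exp (-(θ * s) / 2)) ^ 2 := by
  obtain ⟨m, rfl⟩ := Nat.exists_eq_add_of_le' hs
  set x := 1 - θ
  have hx : 0 ≤ x := by linarith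
  have hpow (k : ℕ) : x ^ k ≤ exp (-(θ * k)) := by
    calc x ^ k ≤ exp (-θ) ^ k := pow_le_pow_left₀ hx (by linarith [add_one_le_exp (-θ)]) k
      _ = exp (-(θ * k)) := by rw [← exp_nat_mul]; ring_nf
  have hkey : x ^ m * (1 + m * θ / 2) ^ 2 ≤ 1 := by
    calc x ^ m * (1 + m * θ / 2) ^ 2 ≤ exp (-(θ * m)) * exp (m * θ / 2) ^ 2 := by
          gcongr
          · exact hpow m
          · linarith [add_one_le_exp (m * θ / 2)]
      _ = 1 := by rw [← exp_nat_mul, ← exp_add]; norm_num; ring_nf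
  set Q := x ^ (m + 1) * (2 + m * θ)
  set c := exp (-(θ * ↑(m + 2)) / 2)
  have hQ : Q ^ 2 ≤ 4 * x ^ (m + 2) := by
    rw [show Q ^ 2 = 4 * x ^ (m + 2) * (x ^ m * (1 + m * θ / 2) ^ 2) by ring]
    exact mul_le_of_le_one_right (by positivity) hkey
  have hxc : x ^ (m + 2) ≤ c ^ 2 := by
    rw [← exp_nat_mul]
    convert hpow (m + 2) using 2
    ring
  have hQc : Q / 2 ≤ c :=
    (pow_le_pow_iff_left₀ (by positivity) (exp_pos _).le two_ne_zero).1 (by nlinarith)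
  have hc1 : c ≤ 1 := exp_le_one_iff.2 (by
    have : 0 ≤ θ * ↑(m + 2) := by positivity
    linarith)
  have hlhs : x ^ (m + 2) + ↑(m + 2) * θ * x ^ (m + 2 - 1) = Q - x ^ (m + 2) := by
    rw [show m + 2 - 1 = m + 1 by omega]; push_cast; ring
  rw [hlhs]
  nlinarith [mul_nonneg (sub_nonneg.2 hQc) (by linarith : 0 ≤ 2 - c - Q / 2)]

lemma cast_pow_sub_add_div_pow {n D s : ℕ} (hn : 0 < n) (hD : D ≤ n) (hs : 1 ≤ s) :
    (((n - D) ^ s + D * (s * (n - D) ^ (s - 1)) : ℕ) : ℝ) / n ^ s =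
      (1 - D / n) ^ s + s * (D / n) * (1 - D / n) ^ (s - 1) := by
  obtain ⟨s, rfl⟩ := Nat.exists_eq_add_of_le' hs
  simp only [Nat.add_sub_cancel]
  have hn' : (n : ℝ) ≠ 0 := by positivity
  rw [one_sub_div hn', div_pow, div_pow]
  push_cast [Nat.cast_sub hD]
  field_simp
  ring

/-- Monotonicity testing (Lemma 16 of Dodis et al.): if `g : {1,…,n} → {0,1}` (encoded on
`Fin n`) is at distance at least `ε n` from every monotone function, then `s ≥ 2` indices
drawn i.i.d. uniformly from `{1,…,n}` reveal a violation of monotonicity (a pair `j_a < j_b`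
with `g(j_a) = 1` and `g(j_b) = 0`) with probability at least `(1 − e^{−εs/2})²`. -/
theorem stmt_10 (n s : ℕ) (hn : 1 ≤ n) (hs : 2 ≤ s) (ε : ℝ) (hε : 0 < ε)
    (g : Fin n → Bool)
    (hfar : ∀ h : Fin n → Bool, Monotone h →
      ε * n ≤ Nat.card {k : Fin n // g k ≠ h k}) :
    (1 - Real.exp (-(ε * s) / 2)) ^ 2 ≤
      (Nat.card {j : Fin s → Fin n //
          ∃ a b : Fin s, j a < j b ∧ g (j a) = true ∧ g (j b) = false} : ℝ) / n ^ s := by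
  change _ ≤ (Nat.card {j : Fin s → Fin n // HasViolation g j} : ℝ) / n ^ s
  set D := ⌈ε * n⌉₊
  have hdis (t : ℕ) : D ≤ #{k | g k ≠ threshold t k} := Nat.ceil_le.2 <| by
    simpa [Nat.card_eq_fintype_card, Fintype.card_subtype] using hfar _ (monotone_threshold t)
  have hDn : D ≤ n := ((hdis 0).trans (card_le_univ _)).trans_eq (Fintype.card_fin n)
  have hn0 : (0 : ℝ) < n := by exact_mod_cast hn
  set θ : ℝ := D / n
  have hεθ : ε ≤ θ := (le_div_iff₀ hn0).2 (Nat.le_ceil _)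
  have hθ1 : θ ≤ 1 := div_le_one_of_le₀ (by exact_mod_cast hDn) hn0.le
  have hεs : 0 ≤ ε * s := by positivity
  calc (1 - exp (-(ε * s) / 2)) ^ 2 ≤ (1 - exp (-(θ * s) / 2)) ^ 2 := by
        gcongr
        exact sub_nonneg.2 (exp_le_one_iff.2 (by linarith))
    _ ≤ 1 - ((1 - θ) ^ s + s * θ * (1 - θ) ^ (s - 1)) := by
        linarith [pow_add_mul_pow_le_one_sub_sq (by positivity) hθ1 hs]
    _ = 1 - (((n - D) ^ s + D * (s * (n - D) ^ (s - 1)) : ℕ) : ℝ) / n ^ s := by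
        rw [cast_pow_sub_add_div_pow hn hDn (by omega)]
    _ ≤ 1 - #{j : Fin s → Fin n | ¬ HasViolation g j} / n ^ s := by
        gcongr
        exact_mod_cast card_not_hasViolation_le_of_le_card_ne hdis
    _ = (Nat.card {j : Fin s → Fin n // HasViolation g j} : ℝ) / n ^ s :=
        (card_hasViolation_div_pow hn).symm
end
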